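/- Let F : ℝ^d → ℝ be differentiable, convex and L-smooth with L > 0, and let w* be a global minimizer of F with ∇F(w*) = 0. Let Δ > 0, set D₀ = ‖w⁰ − w*‖₂ > 0, and define the iterates w^{t+1} = w^t − (1/L)g^t where g^0, g^1, … are any vectors satisfying ‖g^t − ∇F(w^t)‖₂ ≤ Δ for every t. Then with T = ⌈L·D₀/Δ⌉ there exists t ∈ {0, 1, …, T} such that F(w^t) − F(w*) ≤ 16·D₀·Δ. -/

import Mathlib

open scoped RealInnerProductSpace

lemma line_hasDerivAt {d : ℕ} (F : EuclideanSpace ℝ (Fin d) → ℝ)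
    (F' : EuclideanSpace ℝ (Fin d) → EuclideanSpace ℝ (Fin d))
    (hgrad : ∀ w, HasGradientAt F (F' w) w)
    (x v : EuclideanSpace ℝ (Fin d)) (s : ℝ) :
    HasDerivAt (fun s : ℝ => F (x + s • v)) ⟪F' (x + s • v), v⟫ s := by
  have hline : HasDerivAt (fun s : ℝ => x + s • v) v s := by
    simpa using ((hasDerivAt_id s).smul_const v).const_add x
  have h := (hgrad (x + s • v)).hasFDerivAt.comp_hasDerivAt s hline
  simpa [InnerProductSpace.toDual_apply_apply, Function.comp_def] using h

lemma grad_ineq {d : ℕ} (F : EuclideanSpace ℝ (Fin d) → ℝ)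
    (F' : EuclideanSpace ℝ (Fin d) → EuclideanSpace ℝ (Fin d))
    (hgrad : ∀ w, HasGradientAt F (F' w) w)
    (hconv : ConvexOn ℝ Set.univ F)
    (x y : EuclideanSpace ℝ (Fin d)) :
    F x + ⟪F' x, y - x⟫ ≤ F y := by
  set v := y - x
  set φ : ℝ → ℝ := fun s => F (x + s • v) with hφ
  have hφconv : ConvexOn ℝ Set.univ φ := by
    have := hconv.comp_affineMap (AffineMap.lineMap x y : ℝ →ᵃ[ℝ] _)
    simpa [φ, Function.comp_def, AffineMap.lineMap_apply, v, add_comm] using this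
  have hder : HasDerivAt φ ⟪F' x, v⟫ 0 := by
    simpa using line_hasDerivAt F F' hgrad x v 0
  have h := hφconv.le_slope_of_hasDerivAt (Set.mem_univ (0:ℝ)) (Set.mem_univ (1:ℝ))
    one_pos hder
  have : slope φ 0 1 = F y - F x := by
    simp [slope, φ, v]
  linarith [h.trans_eq this]

lemma descent_lemma {d : ℕ} (F : EuclideanSpace ℝ (Fin d) → ℝ)
    (F' : EuclideanSpace ℝ (Fin d) → EuclideanSpace ℝ (Fin d))
    (L : ℝ) (hL : 0 < L)
    (hgrad : ∀ w, HasGradientAt F (F' w) w)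
    (hsmooth : ∀ w w', ‖F' w - F' w'‖ ≤ L * ‖w - w'‖)
    (x y : EuclideanSpace ℝ (Fin d)) :
    F y ≤ F x + ⟪F' x, y - x⟫ + L / 2 * ‖y - x‖ ^ 2 := by
  set v := y - x with hv
  set ψ : ℝ → ℝ := fun s => F (x + s • v) - s * ⟪F' x, v⟫ - s ^ 2 * (L / 2 * ‖v‖ ^ 2) with hψ
  have hder : ∀ s : ℝ, HasDerivAt ψ
      (⟪F' (x + s • v), v⟫ - ⟪F' x, v⟫ - 2 * s * (L / 2 * ‖v‖ ^ 2)) s := by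
    intro s
    have h1 := line_hasDerivAt F F' hgrad x v s
    have h2 : HasDerivAt (fun s : ℝ => s * ⟪F' x, v⟫) ⟪F' x, v⟫ s := by
      simpa using (hasDerivAt_id s).mul_const ⟪F' x, v⟫
    have h3 : HasDerivAt (fun s : ℝ => s ^ 2 * (L / 2 * ‖v‖ ^ 2))
        (2 * s * (L / 2 * ‖v‖ ^ 2)) s := by
      simpa using (hasDerivAt_pow 2 s).mul_const (L / 2 * ‖v‖ ^ 2)
    exact (h1.sub h2).sub h3
  have hnonpos : ∀ s ∈ Set.Ioo (0:ℝ) 1,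
      ⟪F' (x + s • v), v⟫ - ⟪F' x, v⟫ - 2 * s * (L / 2 * ‖v‖ ^ 2) ≤ 0 := by
    intro s hs
    have h1 : ⟪F' (x + s • v) - F' x, v⟫ ≤ ‖F' (x + s • v) - F' x‖ * ‖v‖ :=
      real_inner_le_norm _ _
    have h2 : ‖F' (x + s • v) - F' x‖ ≤ L * ‖s • v‖ := by
      simpa using hsmooth (x + s • v) x
    have h3 : ‖s • v‖ = s * ‖v‖ := by
      rw [norm_smul, Real.norm_eq_abs, abs_of_pos hs.1]
    have h4 : ⟪F' (x + s • v) - F' x, v⟫ = ⟪F' (x + s • v), v⟫ - ⟪F' x, v⟫ :=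
      inner_sub_left _ _ _
    rw [h3] at h2
    have h5 : ‖F' (x + s • v) - F' x‖ * ‖v‖ ≤ L * (s * ‖v‖) * ‖v‖ :=
      mul_le_mul_of_nonneg_right h2 (norm_nonneg v)
    nlinarith [norm_nonneg v, hs.1.le]
  have hanti : AntitoneOn ψ (Set.Icc (0:ℝ) 1) := by
    apply antitoneOn_of_deriv_nonpos (convex_Icc 0 1)
    · exact fun s _ => ((hder s).continuousAt).continuousWithinAt
    · exact fun s _ => ((hder s).differentiableAt).differentiableWithinAt
    · intro s hs
      rw [interior_Icc] at hs
      rw [(hder s).deriv]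
      exact hnonpos s hs
  have h01 := hanti (Set.left_mem_Icc.2 zero_le_one) (Set.right_mem_Icc.2 zero_le_one)
    zero_le_one
  have exy : x + v = y := by simp [hv]
  have e0 : ψ 0 = F x := by simp only [hψ]; norm_num
  have e1 : ψ 1 = F y - ⟪F' x, v⟫ - L / 2 * ‖v‖ ^ 2 := by
    simp only [hψ, one_smul, one_mul, one_pow, exy]
  rw [e0, e1] at h01
  linarith

lemma interp_lemma {d : ℕ} (F : EuclideanSpace ℝ (Fin d) → ℝ)
    (F' : EuclideanSpace ℝ (Fin d) → EuclideanSpace ℝ (Fin d))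
    (L : ℝ) (hL : 0 < L)
    (hgrad : ∀ w, HasGradientAt F (F' w) w)
    (hconv : ConvexOn ℝ Set.univ F)
    (hsmooth : ∀ w w', ‖F' w - F' w'‖ ≤ L * ‖w - w'‖)
    (x y : EuclideanSpace ℝ (Fin d)) :
    F x + ⟪F' x, y - x⟫ + 1 / (2 * L) * ‖F' y - F' x‖ ^ 2 ≤ F y := by
  set δ := F' y - F' x with hδ
  set z := y - L⁻¹ • δ with hz
  have hB := grad_ineq F F' hgrad hconv x z
  have hC := descent_lemma F F' L hL hgrad hsmooth y z
  have ezy : z - y = -(L⁻¹ • δ) := by rw [hz]; abel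
  have ezx : z - x = (y - x) - L⁻¹ • δ := by rw [hz]; abel
  have i1 : ⟪F' x, z - x⟫ = ⟪F' x, y - x⟫ - L⁻¹ * ⟪F' x, δ⟫ := by
    rw [ezx, inner_sub_right, real_inner_smul_right]
  have i2 : ⟪F' y, z - y⟫ = -(L⁻¹ * ⟪F' y, δ⟫) := by
    rw [ezy, inner_neg_right, real_inner_smul_right]
  have i3 : ⟪F' y, δ⟫ - ⟪F' x, δ⟫ = ‖δ‖ ^ 2 := by
    rw [← inner_sub_left, ← hδ, real_inner_self_eq_norm_sq]
  have i4 : ‖z - y‖ ^ 2 = L⁻¹ ^ 2 * ‖δ‖ ^ 2 := by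
    rw [ezy, norm_neg, norm_smul, Real.norm_eq_abs, abs_of_pos (inv_pos.2 hL), mul_pow]
  rw [i1] at hB
  rw [i2, i4] at hC
  have i5 : L⁻¹ * ⟪F' y, δ⟫ - L⁻¹ * ⟪F' x, δ⟫ = L⁻¹ * ‖δ‖ ^ 2 := by
    rw [← mul_sub, i3]
  have i6 : L / 2 * (L⁻¹ ^ 2 * ‖δ‖ ^ 2) = 1 / (2 * L) * ‖δ‖ ^ 2 := by
    field_simp
  have i7 : L⁻¹ * ‖δ‖ ^ 2 = 2 * (1 / (2 * L) * ‖δ‖ ^ 2) := by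
    field_simp
  linarith
set_option maxHeartbeats 1000000 in

lemma gd_arith (L Δ D R G ε P I N c : ℝ) (hL : 0 < L) (hΔ : 0 < Δ) (hD : 0 < D)
    (hc : 0 < c) (hcL : c * L = 1)
    (hP : P = R ^ 2 - 2 * (c * I) + c ^ 2 * N ^ 2)
    (hI : ε + c / 2 * G ^ 2 - Δ * R ≤ I)
    (hN : 0 ≤ N) (hNb : N ≤ G + Δ) (hG : 0 ≤ G) (hGb : G ≤ L * R)
    (hR : 0 ≤ R) (hRb : R ≤ D)
    (hε : 16 * D * Δ < ε) (hΔb : Δ * 32 < L * D) :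
    P ≤ R ^ 2 - 27 * (c * Δ * D) := by
  have hN2 : N ^ 2 ≤ (G + Δ) ^ 2 := by nlinarith
  have key : P ≤ R ^ 2 - 2*c*ε + 2*c*Δ*R + 2*c^2*G*Δ + c^2*Δ^2 := by
    have h1 : c * (ε + c/2*G^2 - Δ*R) ≤ c * I := mul_le_mul_of_nonneg_left hI hc.le
    have h2 : c^2 * N^2 ≤ c^2 * (G+Δ)^2 := by nlinarith [sq_nonneg c]
    nlinarith [h1, h2]
  have hc2 : c^2 * L = c := by
    have : c^2 * L = c * (c * L) := by ring
    rw [this, hcL, mul_one]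
  have hcΔ : 0 < c * Δ := mul_pos hc hΔ
  have b1 : 2*c*Δ*R ≤ 2*(c*Δ*D) := by nlinarith
  have b2 : 2*c^2*G*Δ ≤ 2*(c*Δ*D) := by
    have h3 : c^2*Δ*G ≤ c^2*Δ*(L*R) :=
      mul_le_mul_of_nonneg_left hGb (by positivity)
    have h4 : c^2*Δ*(L*R) = c*Δ*R := by
      have : c^2*Δ*(L*R) = (c^2*L)*(Δ*R) := by ring
      rw [this, hc2]; ring
    nlinarith
  have b3 : c^2*Δ^2 ≤ c*Δ*D := by
    have h5 : c^2*Δ*(Δ*32) ≤ c^2*Δ*(L*D) := by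
      nlinarith [mul_le_mul_of_nonneg_left hΔb.le (by positivity : (0:ℝ) ≤ c^2*Δ)]
    have h6 : c^2*Δ*(L*D) = c*Δ*D := by
      have : c^2*Δ*(L*D) = (c^2*L)*(Δ*D) := by ring
      rw [this, hc2]; ring
    nlinarith
  have b4 : c*(16*D*Δ) < c*ε := mul_lt_mul_of_pos_left hε hc
  have b4' : 16*(c*Δ*D) < c*ε := by nlinarith
  linarith

set_option maxHeartbeats 1000000 in
/-- Inexact gradient descent with step size `1/L` on a convex
`L`-smooth function, with gradient estimates within `Δ` of the true gradients,
reaches within `T = ⌈L·D₀/Δ⌉` iterations a point whose excess risk is at most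
`16·D₀·Δ`, where `D₀ = ‖w⁰ − w*‖`. -/
theorem convex_inexact_gd_reaches_small_excess_risk {d : ℕ}
    (F : EuclideanSpace ℝ (Fin d) → ℝ)
    (F' : EuclideanSpace ℝ (Fin d) → EuclideanSpace ℝ (Fin d))
    (L : ℝ) (hL : 0 < L)
    (hgrad : ∀ w, HasGradientAt F (F' w) w)
    (hconv : ConvexOn ℝ Set.univ F)
    (hsmooth : ∀ w w', ‖F' w - F' w'‖ ≤ L * ‖w - w'‖)
    (wstar : EuclideanSpace ℝ (Fin d)) (hmin : ∀ w, F wstar ≤ F w)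
    (hstar : F' wstar = 0)
    (Δ : ℝ) (hΔ : 0 < Δ)
    (w : ℕ → EuclideanSpace ℝ (Fin d)) (g : ℕ → EuclideanSpace ℝ (Fin d))
    (hD0 : 0 < ‖w 0 - wstar‖)
    (hg : ∀ t, ‖g t - F' (w t)‖ ≤ Δ)
    (hiter : ∀ t, w (t + 1) = w t - (1 / L) • g t) :
    ∃ t ≤ ⌈L * ‖w 0 - wstar‖ / Δ⌉₊, F (w t) - F wstar ≤ 16 * ‖w 0 - wstar‖ * Δ := by
  set D : ℝ := ‖w 0 - wstar‖ with hD
  set T : ℕ := ⌈L * D / Δ⌉₊ with hT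
  by_contra hcon
  push_neg at hcon
  -- hcon : ∀ t ≤ T, 16 * D * Δ < F (w t) - F wstar
  rcases le_or_gt (L * D) (Δ * 32) with hcase | hcase
  · -- Δ large: t = 0 already works
    have hdesc := descent_lemma F F' L hL hgrad hsmooth wstar (w 0)
    rw [hstar] at hdesc
    simp only [inner_zero_left] at hdesc
    have h0 := hcon 0 (Nat.zero_le _)
    nlinarith [hdesc, h0, hD0]
  · -- Δ small: potential decrease argument
    have hc : (0:ℝ) < 1 / L := by positivity
    have hcL : (1 / L) * L = 1 := by field_simp
    set X : ℝ := 27 * ((1 / L) * Δ * D) with hX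
    have hXpos : 0 < X := by positivity
    have key : ∀ t, t ≤ T → ‖w t - wstar‖ ^ 2 ≤ D ^ 2 - t * X := by
      intro t
      induction t with
      | zero => intro _; simp [hD]
      | succ t ih =>
        intro hst
        have htT : t ≤ T := le_trans (Nat.le_succ t) hst
        have iht := ih htT
        have htX : 0 ≤ (t : ℝ) * X := by positivity
        have hRD : ‖w t - wstar‖ ≤ D := by
          nlinarith [norm_nonneg (w t - wstar), hD0, iht]
        -- inner product lower bound
        have hintp := interp_lemma F F' L hL hgrad hconv hsmooth (w t) wstar
        rw [hstar] at hintp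
        have e1 : ⟪F' (w t), wstar - w t⟫ = -⟪F' (w t), w t - wstar⟫ := by
          rw [← inner_neg_right, neg_sub]
        have e2 : ‖(0 : EuclideanSpace ℝ (Fin d)) - F' (w t)‖ = ‖F' (w t)‖ := by
          rw [zero_sub, norm_neg]
        rw [e1, e2] at hintp
        have herr : |⟪g t - F' (w t), w t - wstar⟫| ≤ Δ * ‖w t - wstar‖ := by
          refine (abs_real_inner_le_norm _ _).trans ?_
          exact mul_le_mul_of_nonneg_right (hg t) (norm_nonneg _)
        have esplit : ⟪w t - wstar, g t⟫
            = ⟪F' (w t), w t - wstar⟫ + ⟪g t - F' (w t), w t - wstar⟫ := by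
          rw [real_inner_comm, ← inner_add_left]
          congr 1
          abel
        have hI : (F (w t) - F wstar) + (1/L)/2 * ‖F' (w t)‖ ^ 2 - Δ * ‖w t - wstar‖
            ≤ ⟪w t - wstar, g t⟫ := by
          have h1 : 1 / (2 * L) * ‖F' (w t)‖ ^ 2 = (1/L)/2 * ‖F' (w t)‖ ^ 2 := by
            ring
          rw [esplit]
          have h2 := neg_abs_le ⟪g t - F' (w t), w t - wstar⟫
          linarith [hintp, herr, h2, h1 ▸ hintp]
        -- norm expansion
        have hw1 : w (t+1) - wstar = (w t - wstar) - (1 / L) • g t := by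
          rw [hiter t]; exact sub_right_comm _ _ _
        have hsq : ‖w (t+1) - wstar‖ ^ 2
            = ‖w t - wstar‖ ^ 2 - 2 * ((1/L) * ⟪w t - wstar, g t⟫)
              + (1/L) ^ 2 * ‖g t‖ ^ 2 := by
          rw [hw1, norm_sub_sq_real, real_inner_smul_right, norm_smul,
            Real.norm_eq_abs, abs_of_pos hc, mul_pow]
        have hNb : ‖g t‖ ≤ ‖F' (w t)‖ + Δ := by
          have h3 : g t = F' (w t) + (g t - F' (w t)) := by abel
          calc ‖g t‖ = ‖F' (w t) + (g t - F' (w t))‖ := by rw [← h3]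
            _ ≤ ‖F' (w t)‖ + ‖g t - F' (w t)‖ := norm_add_le _ _
            _ ≤ ‖F' (w t)‖ + Δ := by linarith [hg t]
        have hGb : ‖F' (w t)‖ ≤ L * ‖w t - wstar‖ := by
          have := hsmooth (w t) wstar
          rwa [hstar, sub_zero] at this
        have step := gd_arith L Δ D ‖w t - wstar‖ ‖F' (w t)‖ (F (w t) - F wstar)
          (‖w (t+1) - wstar‖ ^ 2) ⟪w t - wstar, g t⟫ ‖g t‖ (1/L)
          hL hΔ hD0 hc hcL hsq hI (norm_nonneg _) hNb (norm_nonneg _) hGb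
          (norm_nonneg _) hRD (hcon t htT) hcase
        push_cast
        rw [← hX] at step
        linarith [step, iht]
    have hfin := key T le_rfl
    have hceil : L * D / Δ ≤ (T : ℝ) := Nat.le_ceil _
    have h1 : (L * D / Δ) * X ≤ (T : ℝ) * X :=
      mul_le_mul_of_nonneg_right hceil hXpos.le
    have h2 : (L * D / Δ) * X = 27 * D ^ 2 := by
      rw [hX]; field_simp
    nlinarith [sq_nonneg ‖w T - wstar‖, hfin, h1, h2, mul_pos hD0 hD0]
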